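/- arXiv:2604.02625 — 5 statements merged into one kernel-verified Lean document; each statement's English description precedes it below -/
import Mathlib

section
/- Let Y₁ and Y₂ be two constrained polynomial matrix zonotopes in ℝ^{n_x×n} with independent factors: Y₁ = { C₁ + Σ_{i=1}^{γ₁} (Π_{k=1}^{p₁} α_k^{E₁(k,i)}) G₁^{(i)} : α ∈ [-1,1]^{p₁}, Σ_{i=1}^{γ₁} (Π_{k=1}^{p₁} α_k^{R₁(k,i)}) A₁^{(i)} = B₁ } and Y₂ = { C₂ + Σ_{i=1}^{γ₂} (Π_{k=1}^{p₂} β_k^{E₂(k,i)}) G₂^{(i)} : β ∈ [-1,1]^{p₂}, Σ_{i=1}^{γ₂} (Π_{k=1}^{p₂} β_k^{R₂(k,i)}) A₂^{(i)} = B₂ }, where C_j, G_j^{(i)} ∈ ℝ^{n_x×n}, A_j^{(i)}, B_j ∈ ℝ^{n_{c_j}×n_{a_j}}, E_j, R_j ∈ ℕ^{p_j×γ_j}. Define the CPMZ Ŷ over factor dimension p₁+p₂ with center C₁, generators G₁^{(1)},…,G₁^{(γ₁)}, generator exponent matrix Ê = [E₁; 0_{p₂×γ₁}], and 2γ₁+2γ₂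 vector-valued constraint terms (each a column in ℝ^{n_{c₁}n_{a₁}+n_{c₂}n_{a₂}+n_x n}) given in order by: for i = 1,…,γ₁ the column [vec(A₁^{(i)}); 0; 0] with exponent column [R₁(·,i); 0]; for j = 1,…,γ₂ the column [0; vec(A₂^{(j)}); 0] with exponent column [0; R₂(·,j)]; for i = 1,…,γ₁ the column [0; 0; vec(G₁^{(i)})] with exponent column [E₁(·,i); 0]; for j = 1,…,γ₂ the column [0; 0; −vec(G₂^{(j)})] with exponent column [0; E₂(·,j)]; with constraint right-hand side B̂ = [vec(B₁); vec(B₂); vec(C₂ − C₁)]. Then Y₁ ∩ Y₂ = Ŷ, i.e., the constructed CPMZ is an exact representation of the intersection. -/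
open scoped BigOperators

/-- A constrained polynomial matrix zonotope with center `C`, generators `G`,
generator exponent matrix `E`, constraint matrices `A`, constraint right-hand side `B`,
and constraint exponent matrix `R`. -/
def CPMZ {P Γι Τ M N Mc Nc : Type*} [Fintype P] [Fintype Γι] [Fintype Τ]
    (C : Matrix M N ℝ) (G : Γι → Matrix M N ℝ) (E : P → Γι → ℕ)
    (A : Τ → Matrix Mc Nc ℝ) (B : Matrix Mc Nc ℝ) (R : P → Τ → ℕ) :
    Set (Matrix M N ℝ) :=
  { X | ∃ α : P → ℝ, (∀ k, α k ∈ Set.Icc (-1 : ℝ) 1) ∧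
      (∑ j, (∏ k, α k ^ R k j) • A j) = B ∧
      X = C + ∑ i, (∏ k, α k ^ E k i) • G i }

/-- Exact intersection of two constrained polynomial matrix zonotopes:
the intersection `Y₁ ∩ Y₂` is exactly represented by the CPMZ `Ŷ` over factor
dimension `p₁ + p₂` with the generators of `Y₁` and vectorized constraint terms
enforcing both original constraints and the matching condition `Y₁(α) = Y₂(β)`. -/
theorem stmt2 {nx n p₁ p₂ γ₁ γ₂ nc₁ na₁ nc₂ na₂ : ℕ}
    (C₁ : Matrix (Fin nx) (Fin n) ℝ) (G₁ : Fin γ₁ → Matrix (Fin nx) (Fin n) ℝ)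
    (E₁ : Fin p₁ → Fin γ₁ → ℕ)
    (A₁ : Fin γ₁ → Matrix (Fin nc₁) (Fin na₁) ℝ) (B₁ : Matrix (Fin nc₁) (Fin na₁) ℝ)
    (R₁ : Fin p₁ → Fin γ₁ → ℕ)
    (C₂ : Matrix (Fin nx) (Fin n) ℝ) (G₂ : Fin γ₂ → Matrix (Fin nx) (Fin n) ℝ)
    (E₂ : Fin p₂ → Fin γ₂ → ℕ)
    (A₂ : Fin γ₂ → Matrix (Fin nc₂) (Fin na₂) ℝ) (B₂ : Matrix (Fin nc₂) (Fin na₂) ℝ)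
    (R₂ : Fin p₂ → Fin γ₂ → ℕ) :
    CPMZ C₁ G₁ E₁ A₁ B₁ R₁ ∩ CPMZ C₂ G₂ E₂ A₂ B₂ R₂
      = CPMZ (P := Fin p₁ ⊕ Fin p₂)
          (Mc := (Fin nc₁ × Fin na₁) ⊕ ((Fin nc₂ × Fin na₂) ⊕ (Fin nx × Fin n)))
          (Nc := Unit)
          C₁ G₁
          -- extended generator exponent matrix Ê = [E₁; 0]
          (fun k i => match k with
            | Sum.inl k => E₁ k i
            | Sum.inr _ => 0)
          -- the 2γ₁ + 2γ₂ vector-valued constraint terms, in order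
          (fun j => match j with
            | Sum.inl (Sum.inl i) => Matrix.of fun r (_ : Unit) =>
                match r with
                | Sum.inl rc => A₁ i rc.1 rc.2
                | Sum.inr _ => 0
            | Sum.inl (Sum.inr j) => Matrix.of fun r (_ : Unit) =>
                match r with
                | Sum.inr (Sum.inl rc) => A₂ j rc.1 rc.2
                | _ => 0
            | Sum.inr (Sum.inl i) => Matrix.of fun r (_ : Unit) =>
                match r with
                | Sum.inr (Sum.inr rc) => G₁ i rc.1 rc.2
                | _ => 0
            | Sum.inr (Sum.inr j) => Matrix.of fun r (_ : Unit) =>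
                match r with
                | Sum.inr (Sum.inr rc) => -(G₂ j rc.1 rc.2)
                | _ => 0)
          -- right-hand side B̂ = [vec B₁; vec B₂; vec (C₂ − C₁)]
          (Matrix.of fun r (_ : Unit) =>
            match r with
            | Sum.inl rc => B₁ rc.1 rc.2
            | Sum.inr (Sum.inl rc) => B₂ rc.1 rc.2
            | Sum.inr (Sum.inr rc) => C₂ rc.1 rc.2 - C₁ rc.1 rc.2)
          -- constraint exponent matrix R̂
          (fun k j => match k, j with
            | Sum.inl k, Sum.inl (Sum.inl i) => R₁ k i
            | Sum.inr k, Sum.inl (Sum.inr j) => R₂ k j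
            | Sum.inl k, Sum.inr (Sum.inl i) => E₁ k i
            | Sum.inr k, Sum.inr (Sum.inr j) => E₂ k j
            | _, _ => 0) := by
  ext X
  simp only [Set.mem_inter_iff, CPMZ, Set.mem_setOf_eq]
  constructor
  · rintro ⟨⟨α, hα, hc1, hX1⟩, β, hβ, hc2, hX2⟩
    have hc1' : ∀ a b, (∑ i, (∏ k, α k ^ R₁ k i) * A₁ i a b) = B₁ a b := fun a b => by
      have := congrFun (congrFun hc1 a) b
      simpa [Matrix.sum_apply] using this
    have hc2' : ∀ a b, (∑ i, (∏ k, β k ^ R₂ k i) * A₂ i a b) = B₂ a b := fun a b => by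
      have := congrFun (congrFun hc2 a) b
      simpa [Matrix.sum_apply] using this
    have hmatch : ∀ a b, (∑ i, (∏ k, α k ^ E₁ k i) * G₁ i a b)
        - ∑ j, (∏ k, β k ^ E₂ k j) * (G₂ j a b) = C₂ a b - C₁ a b := fun a b => by
      have := congrFun (congrFun (hX1.symm.trans hX2) a) b
      simp only [Matrix.add_apply, Matrix.sum_apply, Matrix.smul_apply, smul_eq_mul] at this
      linarith
    refine ⟨Sum.elim α β, fun k => by cases k <;> simp [hα, hβ], ?_, ?_⟩
    · ext r u
      simp only [Matrix.sum_apply, Matrix.smul_apply, smul_eq_mul, Fintype.sum_sum_type,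
        Fintype.prod_sum_type, Sum.elim_inl, Sum.elim_inr, Matrix.of_apply]
      rcases r with ⟨a, b⟩ | ⟨⟨a, b⟩ | ⟨a, b⟩⟩
      · simp [hc1' a b]
      · simp [hc2' a b]
      · simp only [pow_zero, Finset.prod_const_one, one_mul, mul_one, mul_zero,
          Finset.sum_const_zero, zero_add, add_zero, mul_neg, Finset.sum_neg_distrib,
          Matrix.of_apply]
        have := hmatch a b
        linarith
    · rw [hX1]
      congr 1
      refine Finset.sum_congr rfl fun i _ => ?_
      congr 1
      simp [Fintype.prod_sum_type]
  · rintro ⟨α, hα, hc, hX⟩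
    -- entrywise constraint
    have hc' := fun r => congrFun (congrFun hc r) ()
    have h1 : ∀ a b, (∑ i, (∏ k, α (Sum.inl k) ^ R₁ k i) * A₁ i a b) = B₁ a b := fun a b => by
      have := hc' (Sum.inl (a, b))
      simpa [Matrix.sum_apply, Fintype.sum_sum_type, Fintype.prod_sum_type] using this
    have h2 : ∀ a b, (∑ i, (∏ k, α (Sum.inr k) ^ R₂ k i) * A₂ i a b) = B₂ a b := fun a b => by
      have := hc' (Sum.inr (Sum.inl (a, b)))
      simpa [Matrix.sum_apply, Fintype.sum_sum_type, Fintype.prod_sum_type] using this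
    have h3 : ∀ a b, (∑ i, (∏ k, α (Sum.inl k) ^ E₁ k i) * G₁ i a b)
        - ∑ j, (∏ k, α (Sum.inr k) ^ E₂ k j) * G₂ j a b = C₂ a b - C₁ a b := fun a b => by
      have := hc' (Sum.inr (Sum.inr (a, b)))
      simp only [Matrix.sum_apply, Fintype.sum_sum_type, Fintype.prod_sum_type,
        Matrix.smul_apply, smul_eq_mul, Matrix.of_apply] at this
      simp only [mul_neg, mul_zero, Finset.sum_const_zero, zero_add, add_zero,
        pow_zero, Finset.prod_const_one, one_mul, mul_one, Finset.sum_neg_distrib] at this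
      linarith [this]
    have hX' : X = C₁ + ∑ i, (∏ k, α (Sum.inl k) ^ E₁ k i) • G₁ i := by
      rw [hX]
      congr 1
      refine Finset.sum_congr rfl fun i _ => ?_
      congr 1
      simp [Fintype.prod_sum_type]
    refine ⟨⟨fun k => α (Sum.inl k), fun k => hα _, ?_, hX'⟩,
      fun k => α (Sum.inr k), fun k => hα _, ?_, ?_⟩
    · ext a b; simpa [Matrix.sum_apply] using h1 a b
    · ext a b; simpa [Matrix.sum_apply] using h2 a b
    · rw [hX']
      ext a b
      simp only [Matrix.add_apply, Matrix.sum_apply, Matrix.smul_apply, smul_eq_mul]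
      have := h3 a b
      linarith
end

section
/- Let Φ_tr ∈ ℝ^{n_x×n_x} and Γ_tr ∈ ℝ^{n_x×n_u}, and consider data batches indexed by i = 0,1,…,N: matrices X_i⁺ ∈ ℝ^{n_x×T_i}, X_i⁻ ∈ ℝ^{n_x×T_i}, U_i⁻ ∈ ℝ^{n_u×T_i}, noise sets M_w^{(i)} ⊆ ℝ^{n_x×T_i}, and right inverses D_i' ∈ ℝ^{T_i×(n_x+n_u)} of D_i = [X_i⁻; U_i⁻] (i.e., D_i·D_i' = I). Assume that for each i there exists W_i ∈ M_w^{(i)} with X_i⁺ = Φ_tr X_i⁻ + Γ_tr U_i⁻ + W_i. Define M_i^Σ = { (X_i⁺ − W)·D_i' : W ∈ M_w^{(i)} } and the refined model sets M̂_0^Σ = M_0^Σ and M̂_i^Σ = M_i^Σ ∩ M̂_{i-1}^Σ for i ≥ 1. Then [Φ_tr Γ_tr] ∈ M̂_i^Σ for every i ∈ {0,1,…,N}. -/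
/-! The true model reproduces each batch exactly up to its own noise `W_i`, and `D_i'` is a right
inverse of the regressor `[X_i⁻; U_i⁻]`, so `(X_i⁺ - W_i) D_i' = [Φ_tr Γ_tr] D_i D_i' = [Φ_tr Γ_tr]`.
Hence the true model lies in every `M_i^Σ`, and so in each intersection `M̂_i^Σ`. -/

theorem Matrix.fromCols_eq_sub_mul_of_eq_add {R : Type*} [Ring R]
    {m n p q : Type*} [Fintype n] [Fintype p] [Fintype q] [DecidableEq n] [DecidableEq p]
    {Φ : Matrix m n R} {Γ : Matrix m p R} {Xm : Matrix n q R} {Um : Matrix p q R}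
    {Xp W : Matrix m q R} {D' : Matrix q (n ⊕ p) R}
    (hD' : Matrix.fromRows Xm Um * D' = 1) (hX : Xp = Φ * Xm + Γ * Um + W) :
    Matrix.fromCols Φ Γ = (Xp - W) * D' := by
  have hres : Xp - W = Matrix.fromCols Φ Γ * Matrix.fromRows Xm Um := by
    rw [hX, Matrix.fromCols_mul_fromRows, add_sub_cancel_right]
  rw [hres, Matrix.mul_assoc, hD', Matrix.mul_one]

theorem mem_of_forall_le_mem_of_eq_inter {α : Type*} {x : α} {N : ℕ} {M Mhat : ℕ → Set α}
    (hM : ∀ i ≤ N, x ∈ M i) (hMhat0 : Mhat 0 = M 0)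
    (hMhatS : ∀ i, Mhat (i + 1) = M (i + 1) ∩ Mhat i) :
    ∀ i ≤ N, x ∈ Mhat i := by
  intro i
  induction i with
  | zero => intro h; rw [hMhat0]; exact hM 0 h
  | succ i ih => intro h; rw [hMhatS]; exact ⟨hM _ h, ih (by omega)⟩

/-- Iterative refinement of the set of models for LTI systems: if every data batch
is generated by the true system with noise in the admissible noise set, then the
true model `[Φ_tr Γ_tr]` belongs to every refined model set `M̂_i^Σ`, obtained by
intersecting the data-consistent model sets of successive batches. -/
theorem stmt3 {nx nu : ℕ} (N : ℕ) (T : ℕ → ℕ)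
    (Φtr : Matrix (Fin nx) (Fin nx) ℝ) (Γtr : Matrix (Fin nx) (Fin nu) ℝ)
    (Xp Xm : ∀ i : ℕ, Matrix (Fin nx) (Fin (T i)) ℝ)
    (Um : ∀ i : ℕ, Matrix (Fin nu) (Fin (T i)) ℝ)
    (Mw : ∀ i : ℕ, Set (Matrix (Fin nx) (Fin (T i)) ℝ))
    (D' : ∀ i : ℕ, Matrix (Fin (T i)) (Fin nx ⊕ Fin nu) ℝ)
    (hD' : ∀ i ≤ N, Matrix.fromRows (Xm i) (Um i) * D' i = 1)
    (hdata : ∀ i ≤ N, ∃ W ∈ Mw i, Xp i = Φtr * Xm i + Γtr * Um i + W)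
    (M : ℕ → Set (Matrix (Fin nx) (Fin nx ⊕ Fin nu) ℝ))
    (hM : ∀ i, M i = { Mm | ∃ W ∈ Mw i, Mm = (Xp i - W) * D' i })
    (Mhat : ℕ → Set (Matrix (Fin nx) (Fin nx ⊕ Fin nu) ℝ))
    (hMhat0 : Mhat 0 = M 0)
    (hMhatS : ∀ i : ℕ, Mhat (i + 1) = M (i + 1) ∩ Mhat i) :
    ∀ i ≤ N, Matrix.fromCols Φtr Γtr ∈ Mhat i := by
  refine mem_of_forall_le_mem_of_eq_inter (fun i hi => ?_) hMhat0 hMhatS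
  obtain ⟨W, hW, hX⟩ := hdata i hi
  rw [hM]
  exact ⟨W, hW, Matrix.fromCols_eq_sub_mul_of_eq_add (hD' i hi) hX⟩
end

section
/- In the setting of the exact multiplication between a constrained polynomial matrix zonotope and a constrained polynomial zonotope over a common factor dimension a, assume additionally that the factor supports are disjoint: there is p₁ < a such that rows p₁+1,…,a of Ē_Y and R̄_Y are zero, while rows 1,…,p₁ of Ē_P and R̄_P are zero. Let Y = { C + Σ_{i=1}^{γ} (Π_{k=1}^{a} α_k^{Ē_Y(k,i)}) G^{(i)} : α ∈ [-1,1]^a, Σ_i (Π_k α_k^{R̄_Y(k,i)}) A^{(i)} = B } ⊆ ℝ^{n_x×n} and P = { c + Σ_{j=1}^{h} (Π_{k=1}^{a} α_k^{Ē_P(k,j)}) G_P(·,j) : α ∈ [-1,1]^a, Σ_j (Π_k α_k^{R̄_P(k,j)}) A_P(·,j) = b_P } ⊆ ℝ^n. Then the dependency-preserving product set S = { Y(α)·p(α) : α ∈ [-1,1]^a satisfying both constraint equations } equals the full product set { Y·p : Y ∈ Y, p ∈ P }. Consequently, when the model set and the state set have no shared dependent factors, the exact CPMZ–CPZ multiplication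 represents { Y·p : Y ∈ Y, p ∈ P } exactly. -/
open scoped BigOperators

/-- A constrained polynomial zonotope. -/
def CPZ {N P H M Q : Type*} [Fintype P] [Fintype H] [Fintype Q]
    (c : N → ℝ) (G : N → H → ℝ) (E : P → H → ℕ)
    (A : M → Q → ℝ) (b : M → ℝ) (R : P → Q → ℕ) : Set (N → ℝ) :=
  { x | ∃ α : P → ℝ, (∀ k, α k ∈ Set.Icc (-1 : ℝ) 1) ∧
      (∀ r, ∑ j, (∏ k, α k ^ R k j) * A r j = b r) ∧
      x = fun ℓ => c ℓ + ∑ i, (∏ k, α k ^ E k i) * G ℓ i }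

/-- When the factor supports of the CPMZ `Y` and the CPZ `P` are disjoint
(no shared dependent factors), the dependency-preserving product set equals the
full product set `{ Y·p : Y ∈ 𝒴, p ∈ 𝒫 }`, so the exact CPMZ–CPZ multiplication
represents the set of all products exactly. -/
theorem stmt5 {nx n a γ nc na hP mP q : ℕ} (p₁ : ℕ) (hp₁ : p₁ < a)
    (C : Matrix (Fin nx) (Fin n) ℝ) (G : Fin γ → Matrix (Fin nx) (Fin n) ℝ)
    (EY : Fin a → Fin γ → ℕ)
    (A : Fin γ → Matrix (Fin nc) (Fin na) ℝ) (B : Matrix (Fin nc) (Fin na) ℝ)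
    (RY : Fin a → Fin γ → ℕ)
    (c : Fin n → ℝ) (GP : Fin n → Fin hP → ℝ) (EP : Fin a → Fin hP → ℕ)
    (AP : Fin mP → Fin q → ℝ) (bP : Fin mP → ℝ) (RP : Fin a → Fin q → ℕ)
    (hEY : ∀ k : Fin a, p₁ ≤ (k : ℕ) → ∀ i, EY k i = 0)
    (hRY : ∀ k : Fin a, p₁ ≤ (k : ℕ) → ∀ i, RY k i = 0)
    (hEP : ∀ k : Fin a, (k : ℕ) < p₁ → ∀ j, EP k j = 0)
    (hRP : ∀ k : Fin a, (k : ℕ) < p₁ → ∀ j, RP k j = 0) :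
    { y : Fin nx → ℝ | ∃ α : Fin a → ℝ,
        (∀ k, α k ∈ Set.Icc (-1 : ℝ) 1) ∧
        (∑ i, (∏ k, α k ^ RY k i) • A i) = B ∧
        (∀ r, ∑ j, (∏ k, α k ^ RP k j) * AP r j = bP r) ∧
        y = (C + ∑ i, (∏ k, α k ^ EY k i) • G i).mulVec
              (fun ℓ => c ℓ + ∑ j, (∏ k, α k ^ EP k j) * GP ℓ j) }
    = { y : Fin nx → ℝ | ∃ Y ∈ CPMZ C G EY A B RY, ∃ p ∈ CPZ c GP EP AP bP RP,
          y = Y.mulVec p } := by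
  ext y
  simp only [Set.mem_setOf_eq, CPMZ, CPZ]
  constructor
  · rintro ⟨α, hα, hA, hAP, rfl⟩
    exact ⟨_, ⟨α, hα, hA, rfl⟩, _, ⟨α, hα, hAP, rfl⟩, rfl⟩
  · rintro ⟨Y, ⟨α, hα, hA, rfl⟩, p, ⟨β, hβ, hAP, rfl⟩, rfl⟩
    set m : Fin a → ℝ := fun k => if (k : ℕ) < p₁ then α k else β k with hm
    have hY : ∀ F : Fin a → Fin γ → ℕ, (∀ k : Fin a, p₁ ≤ (k : ℕ) → ∀ i, F k i = 0) →
        ∀ i, (∏ k, m k ^ F k i) = ∏ k, α k ^ F k i := by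
      intro F hF i
      refine Finset.prod_congr rfl fun k _ => ?_
      by_cases h : (k : ℕ) < p₁
      · simp [hm, h]
      · rw [hF k (le_of_not_gt h), pow_zero, pow_zero]
    have hPp : ∀ F : Fin a → Fin q → ℕ, (∀ k : Fin a, (k : ℕ) < p₁ → ∀ j, F k j = 0) →
        ∀ j, (∏ k, m k ^ F k j) = ∏ k, β k ^ F k j := by
      intro F hF j
      refine Finset.prod_congr rfl fun k _ => ?_
      by_cases h : (k : ℕ) < p₁
      · rw [hF k h, pow_zero, pow_zero]
      · simp [hm, h]
    have hPe : ∀ F : Fin a → Fin hP → ℕ, (∀ k : Fin a, (k : ℕ) < p₁ → ∀ j, F k j = 0) →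
        ∀ j, (∏ k, m k ^ F k j) = ∏ k, β k ^ F k j := by
      intro F hF j
      refine Finset.prod_congr rfl fun k _ => ?_
      by_cases h : (k : ℕ) < p₁
      · rw [hF k h, pow_zero, pow_zero]
      · simp [hm, h]
    refine ⟨m, ?_, ?_, ?_, ?_⟩
    · intro k; by_cases h : (k : ℕ) < p₁ <;> simp [hm, h, hα k, hβ k]
    · simp only [hY RY hRY]; exact hA
    · intro r; simp only [hPp RP hRP]; exact hAP r
    · simp only [hY EY hEY, hPe EP hEP]
end

section
/- In the setting of exact addition of two constrained polynomial zonotope parameterizations over a common factor dimension a, assume the factor supports are disjoint: there is p₁ < a such that rows p₁+1,…,a of Ē₁ and R̄₁ are zero, while rows 1,…,p₁ of Ē₂ and R̄₂ are zero. Let P₁ = { p₁(α) : α ∈ [-1,1]^a, first constraint holds } and P₂ = { p₂(α) : α ∈ [-1,1]^a, second constraint holds }. Then the dependency-preserving sum set { p₁(α) + p₂(α) : α ∈ [-1,1]^a satisfying both constraint equations } equals the Minkowski sum P₁ + P₂ = { x + y : x ∈ P₁, y ∈ P₂ }. Consequently, the exact-addition CPZ construction represents the Minkowski sum exactly when the two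 CPZs share no dependent factors. -/
open scoped BigOperators

/-- Exact addition with disjoint factor supports: if the two CPZ parameterizations
over a common factor dimension `a` share no dependent factors, then the
dependency-preserving sum set equals the Minkowski sum of the two CPZs. -/
theorem stmt7 {n a h₁ h₂ m₁ m₂ q₁ q₂ : ℕ} (p₁ : ℕ) (hp₁ : p₁ < a)
    (c₁ : Fin n → ℝ) (G₁ : Fin n → Fin h₁ → ℝ) (E₁ : Fin a → Fin h₁ → ℕ)
    (A₁ : Fin m₁ → Fin q₁ → ℝ) (b₁ : Fin m₁ → ℝ) (R₁ : Fin a → Fin q₁ → ℕ)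
    (c₂ : Fin n → ℝ) (G₂ : Fin n → Fin h₂ → ℝ) (E₂ : Fin a → Fin h₂ → ℕ)
    (A₂ : Fin m₂ → Fin q₂ → ℝ) (b₂ : Fin m₂ → ℝ) (R₂ : Fin a → Fin q₂ → ℕ)
    (hE₁ : ∀ k : Fin a, p₁ ≤ (k : ℕ) → ∀ i, E₁ k i = 0)
    (hR₁ : ∀ k : Fin a, p₁ ≤ (k : ℕ) → ∀ i, R₁ k i = 0)
    (hE₂ : ∀ k : Fin a, (k : ℕ) < p₁ → ∀ i, E₂ k i = 0)
    (hR₂ : ∀ k : Fin a, (k : ℕ) < p₁ → ∀ i, R₂ k i = 0) :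
    { z : Fin n → ℝ | ∃ α : Fin a → ℝ,
        (∀ k, α k ∈ Set.Icc (-1 : ℝ) 1) ∧
        (∀ r, ∑ i, (∏ k, α k ^ R₁ k i) * A₁ r i = b₁ r) ∧
        (∀ r, ∑ i, (∏ k, α k ^ R₂ k i) * A₂ r i = b₂ r) ∧
        z = fun ℓ => (c₁ ℓ + ∑ i, (∏ k, α k ^ E₁ k i) * G₁ ℓ i)
                   + (c₂ ℓ + ∑ i, (∏ k, α k ^ E₂ k i) * G₂ ℓ i) }
    = { z : Fin n → ℝ |
        ∃ x ∈ { x : Fin n → ℝ | ∃ α : Fin a → ℝ,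
            (∀ k, α k ∈ Set.Icc (-1 : ℝ) 1) ∧
            (∀ r, ∑ i, (∏ k, α k ^ R₁ k i) * A₁ r i = b₁ r) ∧
            x = fun ℓ => c₁ ℓ + ∑ i, (∏ k, α k ^ E₁ k i) * G₁ ℓ i },
        ∃ y ∈ { y : Fin n → ℝ | ∃ α : Fin a → ℝ,
            (∀ k, α k ∈ Set.Icc (-1 : ℝ) 1) ∧
            (∀ r, ∑ i, (∏ k, α k ^ R₂ k i) * A₂ r i = b₂ r) ∧
            y = fun ℓ => c₂ ℓ + ∑ i, (∏ k, α k ^ E₂ k i) * G₂ ℓ i },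
        z = x + y } := by
  ext z
  simp only [Set.mem_setOf_eq]
  constructor
  · rintro ⟨α, hα, h1, h2, hz⟩
    exact ⟨_, ⟨α, hα, h1, rfl⟩, _, ⟨α, hα, h2, rfl⟩, hz⟩
  · rintro ⟨x, ⟨β, hβ, hb1, hx⟩, y, ⟨γ, hγ, hg2, hy⟩, hz⟩
    set α : Fin a → ℝ := fun k => if (k : ℕ) < p₁ then β k else γ k with hαdef
    have key1 : ∀ (q : ℕ) (E : Fin a → Fin q → ℕ),
        (∀ k : Fin a, p₁ ≤ (k : ℕ) → ∀ i, E k i = 0) →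
        ∀ i, (∏ k, α k ^ E k i) = ∏ k, β k ^ E k i := by
      intro q E hE i
      refine Finset.prod_congr rfl fun k _ => ?_
      by_cases hk : (k : ℕ) < p₁
      · simp [hαdef, hk]
      · simp [hαdef, hk, hE k (le_of_not_gt hk) i]
    have key2 : ∀ (q : ℕ) (E : Fin a → Fin q → ℕ),
        (∀ k : Fin a, (k : ℕ) < p₁ → ∀ i, E k i = 0) →
        ∀ i, (∏ k, α k ^ E k i) = ∏ k, γ k ^ E k i := by
      intro q E hE i
      refine Finset.prod_congr rfl fun k _ => ?_
      by_cases hk : (k : ℕ) < p₁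
      · simp [hαdef, hk, hE k hk i]
      · simp [hαdef, hk]
    refine ⟨α, fun k => ?_, fun r => ?_, fun r => ?_, ?_⟩
    · by_cases hk : (k : ℕ) < p₁
      · simpa [hαdef, hk] using hβ k
      · simpa [hαdef, hk] using hγ k
    · simp only [key1 q₁ R₁ hR₁]; exact hb1 r
    · simp only [key2 q₂ R₂ hR₂]; exact hg2 r
    · rw [hz, hx, hy]
      funext ℓ
      simp only [Pi.add_apply, key1 h₁ E₁ hE₁, key2 h₂ E₂ hE₂]
end

section
/- Let c ∈ ℝ^n, G ∈ ℝ^{n×h}, E ∈ ℕ^{p×h}, and define the parameterization z(α) ∈ ℝ^n by z(α)_ℓ = c_ℓ + Σ_{i=1}^{h} (Π_{k=1}^{p} α_k^{E(k,i)}) G(ℓ,i) for ℓ = 1,…,n. Then for every exponent vector d ∈ ℕ^n there exist h' ∈ ℕ, c' ∈ ℝ, g' ∈ ℝ^{h'}, and E' ∈ ℕ^{p×h'} such that for all α ∈ ℝ^p: Π_{ℓ=1}^{n} (z(α)_ℓ)^{d_ℓ} = c' + Σ_{i=1}^{h'} (Π_{k=1}^{p} α_k^{E'(k,i)}) g'_i.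 Consequently, for any constraints A ∈ ℝ^{m×q}, b ∈ ℝ^m, R ∈ ℕ^{p×q}, the set of monomial values { Π_{ℓ=1}^{n} (z(α)_ℓ)^{d_ℓ} : α ∈ [-1,1]^p, Σ_{j=1}^{q} (Π_k α_k^{R(k,j)}) A(·,j) = b } equals the one-dimensional constrained polynomial zonotope CPZ(c', g', E', A, b, R); i.e., the image of a CPZ under any monomial map is exactly representable as a CPZ over the same factors with the same constraint equation. -/
open scoped BigOperators

/-- Representability as a finite sum of monomials in `α` with nonnegative
integer exponents. -/
def PolyRep (p : ℕ) (f : (Fin p → ℝ) → ℝ) : Prop :=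
  ∃ (h' : ℕ) (g' : Fin h' → ℝ) (E' : Fin p → Fin h' → ℕ),
    ∀ α : Fin p → ℝ, f α = ∑ i, (∏ k, α k ^ E' k i) * g' i

lemma polyRep_const (p : ℕ) (c : ℝ) : PolyRep p (fun _ => c) := by
  refine ⟨1, fun _ => c, fun _ _ => 0, fun α => ?_⟩
  simp

lemma polyRep_monomial (p : ℕ) (e : Fin p → ℕ) (c : ℝ) :
    PolyRep p (fun α => (∏ k, α k ^ e k) * c) := by
  refine ⟨1, fun _ => c, fun k _ => e k, fun α => ?_⟩
  simp

lemma polyRep_add {p : ℕ} {f g : (Fin p → ℝ) → ℝ} (hf : PolyRep p f)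
    (hg : PolyRep p g) : PolyRep p (fun α => f α + g α) := by
  obtain ⟨h1, g1, E1, H1⟩ := hf
  obtain ⟨h2, g2, E2, H2⟩ := hg
  refine ⟨h1 + h2, Fin.append g1 g2, fun k => Fin.append (E1 k) (E2 k), fun α => ?_⟩
  show f α + g α = _
  rw [H1 α, H2 α, Fin.sum_univ_add]
  simp [Fin.append_left, Fin.append_right]

lemma polyRep_mul {p : ℕ} {f g : (Fin p → ℝ) → ℝ} (hf : PolyRep p f)
    (hg : PolyRep p g) : PolyRep p (fun α => f α * g α) := by
  obtain ⟨h1, g1, E1, H1⟩ := hf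
  obtain ⟨h2, g2, E2, H2⟩ := hg
  refine ⟨h1 * h2,
    fun j => g1 (finProdFinEquiv.symm j).1 * g2 (finProdFinEquiv.symm j).2,
    fun k j => E1 k (finProdFinEquiv.symm j).1 + E2 k (finProdFinEquiv.symm j).2,
    fun α => ?_⟩
  show f α * g α = _
  rw [H1 α, H2 α, Finset.sum_mul_sum]
  rw [← Equiv.sum_comp (finProdFinEquiv : Fin h1 × Fin h2 ≃ Fin (h1 * h2))]
  rw [Fintype.sum_prod_type]
  refine Finset.sum_congr rfl fun i _ => Finset.sum_congr rfl fun j _ => ?_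
  simp [pow_add, Finset.prod_mul_distrib]
  ring

lemma polyRep_sum {p : ℕ} {ι : Type*} (s : Finset ι)
    (f : ι → (Fin p → ℝ) → ℝ) (hf : ∀ i ∈ s, PolyRep p (f i)) :
    PolyRep p (fun α => ∑ i ∈ s, f i α) := by
  classical
  induction s using Finset.cons_induction with
  | empty => simpa using polyRep_const p 0
  | cons a s ha ih =>
      simp only [Finset.sum_cons]
      exact polyRep_add (hf a (Finset.mem_cons_self a s))
        (ih fun i hi => hf i (Finset.mem_cons_of_mem hi))

lemma polyRep_pow {p : ℕ} {f : (Fin p → ℝ) → ℝ} (hf : PolyRep p f) (m : ℕ) :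
    PolyRep p (fun α => f α ^ m) := by
  induction m with
  | zero => simpa using polyRep_const p 1
  | succ m ih =>
      simp only [pow_succ]
      exact polyRep_mul ih hf

lemma polyRep_prod {p : ℕ} {ι : Type*} (s : Finset ι)
    (f : ι → (Fin p → ℝ) → ℝ) (hf : ∀ i ∈ s, PolyRep p (f i)) :
    PolyRep p (fun α => ∏ i ∈ s, f i α) := by
  classical
  induction s using Finset.cons_induction with
  | empty => simpa using polyRep_const p 1
  | cons a s ha ih =>
      simp only [Finset.prod_cons]
      exact polyRep_mul (hf a (Finset.mem_cons_self a s))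
        (ih fun i hi => hf i (Finset.mem_cons_of_mem hi))

/-- Exact monomial evaluation on a CPZ parameterization: for the polynomial
parameterization `z(α)` of a CPZ and any exponent vector `d`, the monomial
`∏_ℓ (z(α)_ℓ)^{d_ℓ}` is again a polynomial in `α` with nonnegative integer
exponents, i.e., it can be written as `c' + Σᵢ (Π_k α_k^{E'(k,i)}) g'_i`.
Consequently, for any constraints `(A, b, R)`, the set of monomial values over
the constrained factors equals the corresponding one-dimensional constrained
polynomial zonotope `CPZ(c', g', E', A, b, R)`. -/
theorem stmt15 {n h p : ℕ} (c : Fin n → ℝ) (G : Fin n → Fin h → ℝ)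
    (E : Fin p → Fin h → ℕ) (d : Fin n → ℕ) :
    ∃ (h' : ℕ) (c' : ℝ) (g' : Fin h' → ℝ) (E' : Fin p → Fin h' → ℕ),
      (∀ α : Fin p → ℝ,
        (∏ ℓ, (c ℓ + ∑ i, (∏ k, α k ^ E k i) * G ℓ i) ^ d ℓ)
          = c' + ∑ i, (∏ k, α k ^ E' k i) * g' i) ∧
      (∀ (m q : ℕ) (A : Fin m → Fin q → ℝ) (b : Fin m → ℝ) (R : Fin p → Fin q → ℕ),
        { t : ℝ | ∃ α : Fin p → ℝ, (∀ k, α k ∈ Set.Icc (-1 : ℝ) 1) ∧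
            (∀ r, ∑ j, (∏ k, α k ^ R k j) * A r j = b r) ∧
            t = ∏ ℓ, (c ℓ + ∑ i, (∏ k, α k ^ E k i) * G ℓ i) ^ d ℓ }
        = { t : ℝ | ∃ α : Fin p → ℝ, (∀ k, α k ∈ Set.Icc (-1 : ℝ) 1) ∧
            (∀ r, ∑ j, (∏ k, α k ^ R k j) * A r j = b r) ∧
            t = c' + ∑ i, (∏ k, α k ^ E' k i) * g' i }) := by
  have hrep : PolyRep p
      (fun α => ∏ ℓ, (c ℓ + ∑ i, (∏ k, α k ^ E k i) * G ℓ i) ^ d ℓ) := by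
    apply polyRep_prod
    intro ℓ _
    apply polyRep_pow
    exact polyRep_add (polyRep_const p (c ℓ))
      (polyRep_sum _ _ fun i _ => polyRep_monomial p (fun k => E k i) (G ℓ i))
  obtain ⟨h', g', E', H⟩ := hrep
  beta_reduce at H
  refine ⟨h', 0, g', E', fun α => by rw [H α]; ring, fun m q A b R => ?_⟩
  ext t
  constructor
  · rintro ⟨α, hα, hc, ht⟩
    exact ⟨α, hα, hc, by rw [ht, H α]; ring⟩
  · rintro ⟨α, hα, hc, ht⟩
    exact ⟨α, hα, hc, by rw [ht, ← H α]; ring⟩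
end
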